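/- Let k be an algebraically closed field of characteristic p > 0, G a finite group, H a normal subgroup of G, and V a finite-dimensional kG-module that is absolutely irreducible as a kH-module, with p not dividing dim V. If H^1(G,k) = 0 and H^1(H, W) = 0, where W is the trace-zero part of End(V), then Ext^1_G(V,V) = 0. -/

import Mathlib

/-!
The trace of a 1-cocycle `f : G → End V` is a cocycle with trivial coefficients, hence zero as
`H¹(G, k) = 0`. Restricted to `H`, `f` is then a cocycle with trace-zero values, so on `H` it
agrees with the coboundary of some trace-zero `w`. The corrected cocycle `f - dw` vanishes on the
normal subgroup `H`, which forces its values to be `H`-invariant; by Schur's lemma they are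
scalars, and a trace-zero scalar vanishes because `p ∤ dim V`.
-/

/-- The conjugation representation of `G` on the space of trace-zero endomorphisms of `V`. -/
noncomputable def tracelessRep {k G V : Type} [Field k] [Group G]
    [AddCommGroup V] [Module k V] [FiniteDimensional k V] (ρ : Representation k G V) :
    Representation k G (LinearMap.ker (LinearMap.trace k V)) where
  toFun g := LinearMap.restrict ((ρ.linHom ρ) g)
    (p := LinearMap.ker (LinearMap.trace k V)) (q := LinearMap.ker (LinearMap.trace k V))
    (fun f hf => by
      simp only [LinearMap.mem_ker] at *
      show LinearMap.trace k V (ρ g ∘ₗ f ∘ₗ ρ g⁻¹) = 0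
      rw [← Module.End.mul_eq_comp, ← Module.End.mul_eq_comp, LinearMap.trace_mul_comm,
        mul_assoc, ← map_mul, inv_mul_cancel, map_one, mul_one, hf])
  map_one' := by
    ext x
    simp [LinearMap.restrict_coe_apply]
  map_mul' g₁ g₂ := by
    ext x
    simp [LinearMap.restrict_coe_apply]


open groupCohomology LinearMap Module

namespace groupCohomology

variable {k G : Type} [CommRing k] [Group G]

theorem subsingleton_H1_iff (A : Rep k G) :
    Subsingleton (H1 A) ↔ ∀ f : cocycles₁ A, ⇑f ∈ coboundaries₁ A := by
  refine ⟨fun _ f => (H1π_eq_zero_iff f).1 (Subsingleton.elim _ _), fun h => ?_⟩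
  have h0 (x : H1 A) : x = 0 := H1_induction_on x fun f => (H1π_eq_zero_iff f).2 (h f)
  exact ⟨fun x y => (h0 x).trans (h0 y).symm⟩

theorem eq_zero_of_mem_cocycles₁_of_isTrivial {A : Rep k G} [A.IsTrivial]
    (hA : Subsingleton (H1 A)) {f : G → A} (hf : f ∈ cocycles₁ A) : f = 0 := by
  have := (subsingleton_H1_iff A).1 hA ⟨f, hf⟩
  rwa [coboundaries₁_eq_bot_of_isTrivial, Submodule.mem_bot] at this

theorem cocycles₁_apply_fixed_of_eq_zero_on_normal {A : Rep k G} {f : G → A}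
    (hf : f ∈ cocycles₁ A) (H : Subgroup G) [H.Normal] (hH : ∀ h ∈ H, f h = 0) (g : G) :
    ∀ h ∈ H, A.ρ h (f g) = f g := by
  intro h hh
  have hconj : g⁻¹ * h * g ∈ H := by simpa using Subgroup.Normal.conj_mem ‹_› h hh g⁻¹
  have hcocycle := (mem_cocycles₁_iff f).1 hf
  calc A.ρ h (f g) = f (h * g) := by rw [hcocycle, hH h hh, add_zero]
    _ = f (g * (g⁻¹ * h * g)) := by group
    _ = f g := by rw [hcocycle, hH _ hconj, map_zero, zero_add]

end groupCohomology

namespace Representation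

variable {k G V : Type} [Field k] [AddCommGroup V] [Module k V]

theorem exists_eq_smul_one_of_forall_commute [Monoid G] [IsAlgClosed k] [FiniteDimensional k V]
    [Nontrivial V] (σ : Representation k G V)
    (hirr : ∀ U : Submodule k V, (∀ g, U.map (σ g) ≤ U) → U = ⊥ ∨ U = ⊤)
    {e : End k V} (he : ∀ g, Commute e (σ g)) : ∃ c : k, e = c • 1 := by
  obtain ⟨c, hc⟩ := End.exists_eigenvalue e
  have hstable (g : G) : (End.eigenspace e c).map (σ g) ≤ End.eigenspace e c :=
    Submodule.map_le_iff_le_comap.2 fun _ hv => End.mapsTo_genEigenspace_of_comm (he g) c 1 hv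
  refine ⟨c, ?_⟩
  rcases hirr _ hstable with hbot | htop
  · exact absurd hbot hc
  · ext v
    exact End.mem_eigenspace_iff.1 (htop ▸ Submodule.mem_top : v ∈ End.eigenspace e c)

theorem eq_zero_of_forall_commute_of_trace_eq_zero [Monoid G] [IsAlgClosed k]
    [FiniteDimensional k V] (σ : Representation k G V)
    (hirr : ∀ U : Submodule k V, (∀ g, U.map (σ g) ≤ U) → U = ⊥ ∨ U = ⊤)
    (hV : (finrank k V : k) ≠ 0) {e : End k V} (he : ∀ g, Commute e (σ g))
    (htr : trace k V e = 0) : e = 0 := by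
  have : Nontrivial V := Module.nontrivial_of_finrank_pos (R := k)
    (Nat.pos_of_ne_zero fun h => hV (by simp [h]))
  obtain ⟨c, rfl⟩ := σ.exists_eq_smul_one_of_forall_commute hirr he
  rw [map_smul, End.one_eq_id, trace_id, smul_eq_mul, mul_eq_zero] at htr
  rw [htr.resolve_right hV, zero_smul]

variable [Group G] (ρ : Representation k G V)

theorem linHom_self_apply_eq_iff_commute (g : G) (e : End k V) :
    ρ.linHom ρ g e = e ↔ Commute e (ρ g) :=
  (linHom.mem_invariants_iff_comm (X := Rep.of ρ) (Y := Rep.of ρ) e g).trans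
    (commute_iff_eq _ _).symm

theorem trace_linHom_self_apply [FiniteDimensional k V] (g : G) (e : End k V) :
    trace k V (ρ.linHom ρ g e) = trace k V e := by
  rw [linHom_apply, ← End.mul_eq_comp, ← End.mul_eq_comp, trace_mul_comm, mul_assoc,
    ← map_mul, inv_mul_cancel, map_one, mul_one]

theorem trace_eq_zero_of_mem_cocycles₁ [FiniteDimensional k V]
    (h1 : Subsingleton (H1 (Rep.trivial k G k))) {f : G → End k V}
    (hf : f ∈ cocycles₁ (Rep.of (ρ.linHom ρ))) (g : G) : trace k V (f g) = 0 := by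
  have htr : (fun g => trace k V (f g)) ∈ cocycles₁ (Rep.trivial k G k) := by
    rw [mem_cocycles₁_iff] at hf ⊢
    intro g h
    rw [hf, map_add, Rep.trivial_ρ_apply]
    exact congrArg (· + _) (ρ.trace_linHom_self_apply g (f h))
  exact congrFun (eq_zero_of_mem_cocycles₁_of_isTrivial h1 htr) g

theorem restrict_mem_cocycles₁_tracelessRep [FiniteDimensional k V] (H : Subgroup G)
    {f : G → End k V} (hf : f ∈ cocycles₁ (Rep.of (ρ.linHom ρ)))
    (htr : ∀ g, trace k V (f g) = 0) :
    (fun h : H => (⟨f h, htr h⟩ : ker (trace k V))) ∈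
      cocycles₁ (Rep.of (tracelessRep (ρ.comp H.subtype))) := by
  rw [mem_cocycles₁_iff] at hf ⊢
  exact fun g h => Subtype.ext (hf g h)

theorem eq_zero_of_mem_cocycles₁_of_eq_zero_on_normal [IsAlgClosed k] [FiniteDimensional k V]
    (H : Subgroup G) [H.Normal]
    (hirr : ∀ U : Submodule k V, (∀ h : H, U.map (ρ h) ≤ U) → U = ⊥ ∨ U = ⊤)
    (hV : (finrank k V : k) ≠ 0) {f : G → End k V} (hf : f ∈ cocycles₁ (Rep.of (ρ.linHom ρ)))
    (htr : ∀ g, trace k V (f g) = 0) (hH : ∀ h ∈ H, f h = 0) : f = 0 := by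
  funext g
  refine eq_zero_of_forall_commute_of_trace_eq_zero (ρ.comp H.subtype) hirr hV (fun h => ?_)
    (htr g)
  exact (ρ.linHom_self_apply_eq_iff_commute h (f g)).1
    (cocycles₁_apply_fixed_of_eq_zero_on_normal hf H hH g h h.2)

end Representation

theorem stmt4_general {k : Type} [Field k] [IsAlgClosed k] {p : ℕ} [CharP k p]
    {G : Type} [Group G] (H : Subgroup G) [H.Normal]
    {V : Type} [AddCommGroup V] [Module k V] [FiniteDimensional k V]
    (ρ : Representation k G V)
    (hirrH : ∀ U : Submodule k V, (∀ h : H, U.map (ρ h) ≤ U) → U = ⊥ ∨ U = ⊤)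
    (hdim : ¬ p ∣ Module.finrank k V)
    (h2 : Subsingleton (groupCohomology.H1 (Rep.trivial k G k)))
    (h1H : Subsingleton (groupCohomology.H1 (Rep.of (tracelessRep (ρ.comp H.subtype))))) :
    Subsingleton (groupCohomology.H1 (Rep.of (ρ.linHom ρ))) := by
  have hV : (finrank k V : k) ≠ 0 := (CharP.cast_eq_zero_iff k p _).not.2 hdim
  rw [subsingleton_H1_iff] at h1H ⊢
  intro f
  have htr : ∀ g, trace k V (f g) = 0 := ρ.trace_eq_zero_of_mem_cocycles₁ h2 f.2
  obtain ⟨w, hw⟩ := h1H ⟨_, ρ.restrict_mem_cocycles₁_tracelessRep H f.2 htr⟩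
  refine ⟨w.1, (sub_eq_zero.1 ?_).symm⟩
  refine ρ.eq_zero_of_mem_cocycles₁_of_eq_zero_on_normal H hirrH hV
    (sub_mem f.2 (d₀₁_apply_mem_cocycles₁ _)) (fun g => ?_) (fun h hh => ?_)
  · show trace k V (f g - (ρ.linHom ρ g w - w)) = 0
    rw [map_sub, map_sub, htr, ρ.trace_linHom_self_apply, sub_self, sub_zero]
  · show f h - (ρ.linHom ρ h w - w) = 0
    rw [sub_eq_zero]
    exact congrArg Subtype.val (congrFun hw ⟨h, hh⟩).symm

/-- If `V` is a `kG`-module that is absolutely irreducible over a normal subgroup `H`, with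
`p ∤ dim V`, `H¹(G,k) = 0` and `H¹(H,W) = 0` for the trace-zero part `W` of `End(V)`, then
`Ext¹_G(V,V) ≅ H¹(G, V* ⊗ V) = 0`. -/
theorem stmt4 {k : Type} [Field k] [IsAlgClosed k] {p : ℕ} [Fact p.Prime] [CharP k p]
    {G : Type} [Group G] [Finite G] (H : Subgroup G) [H.Normal]
    {V : Type} [AddCommGroup V] [Module k V] [FiniteDimensional k V]
    (ρ : Representation k G V)
    (hirrH : ∀ U : Submodule k V, (∀ h : H, U.map (ρ h) ≤ U) → U = ⊥ ∨ U = ⊤)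
    (hdim : ¬ p ∣ Module.finrank k V)
    (h2 : Subsingleton (groupCohomology.H1 (Rep.trivial k G k)))
    (h1H : Subsingleton (groupCohomology.H1 (Rep.of (tracelessRep (ρ.comp H.subtype))))) :
    Subsingleton (groupCohomology.H1 (Rep.of (ρ.linHom ρ))) :=
  stmt4_general H ρ hirrH hdim h2 h1H
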